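/- arXiv:2406.06429 — 2 statements merged into one kernel-verified Lean document; each statement's English description precedes it below -/
import Mathlib

section
/- Let n be even, m ≥ n + 1, and let F : 𝔽₂ⁿ → 𝔽₂^m be an embedding (i.e., injective) such that every nontrivial component F_λ (λ ≠ 0) is partially-bent. Then |B(F)| ≥ 2ⁿ − 1, and equality holds if and only if for every λ ≠ 0 with F_λ unbalanced, F_λ is bent (equivalently, V(F_λ) = {0}). -/
/-- The vector space 𝔽₂ⁿ. -/
abbrev BV (n : ℕ) := Fin n → ZMod 2

/-- First-order derivative of a Boolean function: `D_a f (x) = f (x + a) + f x`. -/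
def bderiv {n : ℕ} (f : BV n → ZMod 2) (a : BV n) : BV n → ZMod 2 :=
  fun x => f (x + a) + f x

/-- Weight of a Boolean function: the number of inputs mapped to 1. -/
noncomputable def bwt {n : ℕ} (f : BV n → ZMod 2) : ℕ := {x | f x = 1}.ncard

/-- `𝔉(f) = Σ_x (-1)^(f x)`. -/
def fou {n : ℕ} (f : BV n → ZMod 2) : ℤ := ∑ x : BV n, (-1 : ℤ) ^ (f x).val

/-- Component function `F_λ(x) = λ · F(x)` (dot product over 𝔽₂). -/
def cmpnt {n m : ℕ} (F : BV n → BV m) (l : BV m) : BV n → ZMod 2 :=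
  fun x => ∑ i, l i * F x i

/-- A Boolean function on n variables is balanced if its weight is `2^(n-1)`. -/
def IsBalanced {n : ℕ} (f : BV n → ZMod 2) : Prop := bwt f = 2 ^ (n - 1)

/-!
Write `𝔉(f) = ∑ₓ (-1)^f(x)`, so that `f` is balanced iff `𝔉(f) = 0`, and `𝔉(f)² = ∑ₐ 𝔉(Dₐf)`.
If `f` is unbalanced and partially-bent, each `Dₐf` is either balanced or identically `0`
(a constant `1` would force `𝔉(f) = -𝔉(f)`), hence `𝔉(f)² ≥ 2ⁿ` with equality iff `f` is bent.
For injective `F`, character orthogonality gives `∑_λ 𝔉(F_λ)² = 2^(m+n)`. The balanced components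
contribute nothing and `λ = 0` contributes `2^(2n)`, so the nonzero unbalanced components share
`2ⁿ(2^m - 2ⁿ)`, each taking at least `2ⁿ`: there are at most `2^m - 2ⁿ` of them, with equality
iff all of them are bent.
-/

open Finset Matrix

section CardBound

variable {ι R : Type*} [CommRing R] [LinearOrder R] [IsStrictOrderedRing R]
  {s : Finset ι} {g : ι → R} {c N : R}

theorem Finset.natCast_card_le_of_le_of_sum_eq (hc : 0 < c) (hg : ∀ i ∈ s, c ≤ g i)
    (hsum : ∑ i ∈ s, g i = c * N) : (#s : R) ≤ N := by
  have := s.card_nsmul_le_sum g c hg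
  rw [nsmul_eq_mul, hsum, mul_comm c] at this
  exact le_of_mul_le_mul_right this hc

theorem Finset.natCast_card_eq_iff_of_le_of_sum_eq (hc : 0 < c) (hg : ∀ i ∈ s, c ≤ g i)
    (hsum : ∑ i ∈ s, g i = c * N) : (#s : R) = N ↔ ∀ i ∈ s, g i = c := by
  have hconst : ∑ _i ∈ s, c = #s * c := by rw [sum_const, nsmul_eq_mul]
  rw [← mul_left_inj' hc.ne', ← hconst, mul_comm N, ← hsum,
    sum_eq_sum_iff_of_le hg]
  exact forall₂_congr fun _ _ => eq_comm

end CardBound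

def signChar : AddChar (ZMod 2) ℤ where
  toFun a := (-1) ^ a.val
  map_zero_eq_one' := rfl
  map_add_eq_mul' := by decide

lemma signChar_eq_one_iff {c : ZMod 2} : signChar c = 1 ↔ c = 0 := by
  revert c
  decide

def IsPartiallyBent {n : ℕ} (f : BV n → ZMod 2) : Prop :=
  ∀ a, (∃ c, ∀ x, bderiv f a x = c) ∨ IsBalanced (bderiv f a)

def IsBent {n : ℕ} (f : BV n → ZMod 2) : Prop :=
  ∀ a, a ≠ 0 → IsBalanced (bderiv f a)

section Walsh

variable {n : ℕ}

lemma fou_eq_sum_signChar (f : BV n → ZMod 2) : fou f = ∑ x, signChar (f x) := rfl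

lemma fou_eq_two_pow_sub_two_mul_bwt (f : BV n → ZMod 2) : fou f = 2 ^ n - 2 * (bwt f : ℤ) := by
  have hsign : ∀ a : ZMod 2, signChar a = 1 - 2 * if a = 1 then 1 else 0 := by decide
  have hbwt : bwt f = #{x | f x = 1} := by
    rw [bwt, Set.ncard_eq_toFinset_card']
    simp
  simp only [fou_eq_sum_signChar, hsign, sum_sub_distrib, ← mul_sum, sum_boole, hbwt]
  simp

lemma isBalanced_iff_fou_eq_zero (hn : 1 ≤ n) (f : BV n → ZMod 2) :
    IsBalanced f ↔ fou f = 0 := by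
  obtain ⟨k, rfl⟩ := Nat.exists_eq_add_of_le' hn
  rw [IsBalanced, fou_eq_two_pow_sub_two_mul_bwt, Nat.add_sub_cancel, pow_succ, sub_eq_zero]
  constructor
  · intro h; rw [h]; push_cast; ring
  · intro h; exact_mod_cast (by linarith : (bwt f : ℤ) = 2 ^ k)

lemma fou_zero : fou (fun _ : BV n => (0 : ZMod 2)) = 2 ^ n := by
  simp [fou_eq_sum_signChar]

lemma bderiv_zero (f : BV n → ZMod 2) : bderiv f 0 = fun _ => 0 := by
  funext x
  simp [bderiv, ZModModule.add_self]

lemma fou_sq_eq_sum_fou_bderiv (f : BV n → ZMod 2) : fou f ^ 2 = ∑ a, fou (bderiv f a) := by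
  have hshift : ∀ x : BV n, ∑ a, signChar (f (x + a)) = fou f := fun x =>
    Equiv.sum_comp (Equiv.addLeft x) (fun y => signChar (f y))
  calc fou f ^ 2 = ∑ x, (∑ a, signChar (f (x + a))) * signChar (f x) := by
        simp only [hshift, sq, fou_eq_sum_signChar, mul_sum]
    _ = ∑ a, ∑ x, signChar (f (x + a) + f x) := by
        simp only [sum_mul, AddChar.map_add_eq_mul]
        exact sum_comm
    _ = ∑ a, fou (bderiv f a) := rfl

lemma eq_zero_of_bderiv_eq_const {f : BV n → ZMod 2} (hf : fou f ≠ 0) {a : BV n} {c : ZMod 2}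
    (hc : ∀ x, bderiv f a x = c) : c = 0 := by
  have hshift : signChar c * fou f = fou f :=
    calc signChar c * fou f = ∑ x, signChar (c + f x) := by
          rw [fou_eq_sum_signChar, mul_sum]
          simp only [AddChar.map_add_eq_mul]
      _ = ∑ x, signChar (f (x + a)) := by
          refine sum_congr rfl fun x _ => ?_
          rw [← hc x, bderiv, add_assoc, ZModModule.add_self, add_zero]
      _ = fou f := Equiv.sum_comp (Equiv.addRight a) (fun y => signChar (f y))
  exact signChar_eq_one_iff.mp ((mul_eq_right₀ hf).mp hshift)

end Walsh

section PartiallyBent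

variable {n : ℕ} {f : BV n → ZMod 2}

lemma fou_sq_eq_two_pow_add_sum (f : BV n → ZMod 2) :
    fou f ^ 2 = 2 ^ n + ∑ a ∈ univ.erase 0, fou (bderiv f a) := by
  rw [fou_sq_eq_sum_fou_bderiv, ← add_sum_erase _ _ (mem_univ 0), bderiv_zero, fou_zero]

lemma IsPartiallyBent.fou_bderiv_nonneg (hn : 1 ≤ n) (hf : IsPartiallyBent f) (hb : fou f ≠ 0)
    (a : BV n) : 0 ≤ fou (bderiv f a) := by
  rcases hf a with ⟨c, hc⟩ | hbal
  · have hzero : bderiv f a = fun _ => 0 :=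
      funext fun x => (hc x).trans (eq_zero_of_bderiv_eq_const hb hc)
    rw [hzero, fou_zero]
    positivity
  · exact ((isBalanced_iff_fou_eq_zero hn _).mp hbal).ge

lemma IsPartiallyBent.two_pow_le_fou_sq (hn : 1 ≤ n) (hf : IsPartiallyBent f)
    (hb : ¬IsBalanced f) : 2 ^ n ≤ fou f ^ 2 := by
  rw [isBalanced_iff_fou_eq_zero hn] at hb
  rw [fou_sq_eq_two_pow_add_sum]
  exact le_add_of_nonneg_right (sum_nonneg fun a _ => hf.fou_bderiv_nonneg hn hb a)

lemma IsPartiallyBent.fou_sq_eq_two_pow_iff_isBent (hn : 1 ≤ n) (hf : IsPartiallyBent f)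
    (hb : ¬IsBalanced f) : fou f ^ 2 = 2 ^ n ↔ IsBent f := by
  rw [isBalanced_iff_fou_eq_zero hn] at hb
  rw [fou_sq_eq_two_pow_add_sum, add_eq_left,
    sum_eq_zero_iff_of_nonneg fun a _ => hf.fou_bderiv_nonneg hn hb a]
  simp [IsBent, isBalanced_iff_fou_eq_zero hn]

end PartiallyBent

section Parseval

variable {n m : ℕ}

lemma sum_signChar_dotProduct (v : BV m) :
    ∑ l : BV m, signChar (l ⬝ᵥ v) = if v = 0 then 2 ^ m else 0 := by
  let ψ : AddChar (BV m) ℤ :=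
    signChar.compAddMonoidHom (AddMonoidHom.mk' (· ⬝ᵥ v) fun l l' => add_dotProduct l l' v)
  have hψ : ψ = 0 ↔ v = 0 := by
    refine ⟨fun h => ?_, fun h => ?_⟩
    · by_contra hv
      obtain ⟨i, hi⟩ := Function.ne_iff.mp hv
      have := AddChar.eq_zero_iff.mp h (Pi.single i 1)
      simp [ψ, single_dotProduct, signChar_eq_one_iff] at this
      exact hi this
    · ext l
      simp [ψ, h]
  have hsum := ψ.sum_eq_ite
  simp only [hψ, Fintype.card_pi, ZMod.card, prod_const, card_univ, Fintype.card_fin] at hsum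
  exact hsum

lemma fou_cmpnt (F : BV n → BV m) (l : BV m) : fou (cmpnt F l) = ∑ x, signChar (l ⬝ᵥ F x) := rfl

lemma sum_fou_cmpnt_sq {F : BV n → BV m} (hF : Function.Injective F) :
    ∑ l, fou (cmpnt F l) ^ 2 = 2 ^ (m + n) := by
  have hdiff : ∀ x y, F x + F y = 0 ↔ x = y := fun x y => by
    rw [← ZModModule.sub_eq_add, sub_eq_zero, hF.eq_iff]
  calc ∑ l, fou (cmpnt F l) ^ 2
      = ∑ x, ∑ y, ∑ l : BV m, signChar (l ⬝ᵥ (F x + F y)) := by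
        simp only [fou_cmpnt, sq, sum_mul_sum, dotProduct_add, AddChar.map_add_eq_mul]
        rw [sum_comm]
        exact sum_congr rfl fun x _ => sum_comm
    _ = ∑ x : BV n, (2 : ℤ) ^ m := by
        simp only [sum_signChar_dotProduct, hdiff, sum_ite_eq, mem_univ, if_true]
    _ = 2 ^ (m + n) := by simp [pow_add, mul_comm]

end Parseval

section Components

open scoped Classical

variable {n m : ℕ} (F : BV n → BV m)

noncomputable def unbalancedNonzero : Finset (BV m) :=
  {l | l ≠ 0 ∧ ¬IsBalanced (cmpnt F l)}

lemma mem_unbalancedNonzero {l : BV m} :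
    l ∈ unbalancedNonzero F ↔ l ≠ 0 ∧ ¬IsBalanced (cmpnt F l) := by
  simp [unbalancedNonzero]

lemma cmpnt_zero : cmpnt F 0 = fun _ => 0 := by
  funext x
  simp [cmpnt]

lemma insert_zero_unbalancedNonzero (hn : 1 ≤ n) :
    insert 0 (unbalancedNonzero F) = univ.filter fun l => ¬IsBalanced (cmpnt F l) := by
  have h0 : ¬IsBalanced (cmpnt F 0) := by
    rw [isBalanced_iff_fou_eq_zero hn, cmpnt_zero, fou_zero]
    positivity
  ext l
  by_cases hl : l = 0 <;> simp [unbalancedNonzero, hl, h0]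

lemma ncard_balanced_add_card_unbalancedNonzero (hn : 1 ≤ n) :
    {l | IsBalanced (cmpnt F l)}.ncard + #(unbalancedNonzero F) + 1 = 2 ^ m := by
  rw [Set.ncard_eq_toFinset_card', Set.toFinset_ofPred, add_assoc,
    ← card_insert_of_notMem (a := 0) (by simp [unbalancedNonzero]),
    insert_zero_unbalancedNonzero F hn, card_filter_add_card_filter_not]
  simp

lemma sum_fou_sq_unbalancedNonzero (hn : 1 ≤ n) (hF : Function.Injective F) :
    ∑ l ∈ unbalancedNonzero F, fou (cmpnt F l) ^ 2 = 2 ^ n * (2 ^ m - 2 ^ n) := by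
  have hbal : ∑ l with IsBalanced (cmpnt F l), fou (cmpnt F l) ^ 2 = 0 :=
    sum_eq_zero fun l hl => by
      rw [(isBalanced_iff_fou_eq_zero hn _).mp (mem_filter.mp hl).2]
      simp
  have htotal := sum_fou_cmpnt_sq hF
  rw [← sum_filter_add_sum_filter_not _ fun l => IsBalanced (cmpnt F l), hbal, zero_add,
    ← insert_zero_unbalancedNonzero F hn, sum_insert (by simp [unbalancedNonzero]), cmpnt_zero,
    fou_zero] at htotal
  rw [pow_add] at htotal
  linear_combination htotal

end Components

theorem least_balanced_components_even_general (n m : ℕ) (hn : 1 ≤ n)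
    (F : BV n → BV m) (hF : Function.Injective F)
    (hpb : ∀ l : BV m, l ≠ 0 → ∀ a : BV n,
      (∃ c, ∀ x, bderiv (cmpnt F l) a x = c) ∨ IsBalanced (bderiv (cmpnt F l) a)) :
    2 ^ n - 1 ≤ {l : BV m | IsBalanced (cmpnt F l)}.ncard
    ∧ ({l : BV m | IsBalanced (cmpnt F l)}.ncard = 2 ^ n - 1 ↔
        ∀ l : BV m, l ≠ 0 → ¬ IsBalanced (cmpnt F l) →
          ∀ a : BV n, a ≠ 0 → IsBalanced (bderiv (cmpnt F l) a)) := by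
  have hpb' : ∀ l, l ≠ 0 → IsPartiallyBent (cmpnt F l) := hpb
  have hlow : ∀ l ∈ unbalancedNonzero F, 2 ^ n ≤ fou (cmpnt F l) ^ 2 := fun l hl => by
    rw [mem_unbalancedNonzero] at hl
    exact (hpb' l hl.1).two_pow_le_fou_sq hn hl.2
  have hsum := sum_fou_sq_unbalancedNonzero F hn hF
  have hcard_le := natCast_card_le_of_le_of_sum_eq (by positivity) hlow hsum
  have hcard_eq := natCast_card_eq_iff_of_le_of_sum_eq (by positivity) hlow hsum
  have hbent : (∀ l ∈ unbalancedNonzero F, fou (cmpnt F l) ^ 2 = 2 ^ n) ↔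
      ∀ l : BV m, l ≠ 0 → ¬ IsBalanced (cmpnt F l) → IsBent (cmpnt F l) := by
    simp only [mem_unbalancedNonzero, and_imp]
    exact forall₃_congr fun l hl hb => (hpb' l hl).fou_sq_eq_two_pow_iff_isBent hn hb
  have hcount := ncard_balanced_add_card_unbalancedNonzero F hn
  have hpow : 1 ≤ 2 ^ n := Nat.one_le_two_pow
  refine ⟨?_, (?_ : _ ↔ _).trans (hcard_eq.trans hbent)⟩ <;> zify [hpow] at * <;> omega

/-- For n even, m ≥ n+1, F an embedding whose nontrivial components are all
    partially-bent: |B(F)| ≥ 2ⁿ − 1, with equality iff every unbalanced nontrivial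
    component is bent (all its nonzero derivatives are balanced). -/
theorem least_balanced_components_even (n m : ℕ) (hev : Even n) (hn : 1 ≤ n)
    (hnm : n + 1 ≤ m) (F : BV n → BV m) (hF : Function.Injective F)
    (hpb : ∀ l : BV m, l ≠ 0 → ∀ a : BV n,
      (∃ c, ∀ x, bderiv (cmpnt F l) a x = c) ∨ IsBalanced (bderiv (cmpnt F l) a)) :
    2 ^ n - 1 ≤ {l : BV m | IsBalanced (cmpnt F l)}.ncard
    ∧ ({l : BV m | IsBalanced (cmpnt F l)}.ncard = 2 ^ n - 1 ↔
        ∀ l : BV m, l ≠ 0 → ¬ IsBalanced (cmpnt F l) →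
          ∀ a : BV n, a ≠ 0 → IsBalanced (bderiv (cmpnt F l) a)) :=
  least_balanced_components_even_general n m hn F hF hpb
end

section
/- Let F : 𝔽₂ⁿ → 𝔽₂^{n+1} be an embedding (i.e., injective). Then exactly one of the following holds: (i) |C(F)| = 2, i.e., there is exactly one nonzero λ with F_λ constant, and in this case F_μ is balanced for every μ ∉ C(F); or (ii) |C(F)| = 1, i.e., F has no constant nontrivial component. -/
/-!
If some nonzero component `F_l` is constant `c`, the `2ⁿ` points of the image of `F` all lie in
the affine hyperplane `{y | l ⬝ᵥ y = c}`, which also has `2ⁿ` points, so the image *is* that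
hyperplane. A hyperplane of `𝔽₂^m` determines its normal vector, hence `l` is unique. If `F_μ`
is not constant, pick `x₁` with `F_μ x₁ ≠ F_μ 0`; translating the image by
`d = F x₁ + F 0` preserves it (since `l ⬝ᵥ d = 0`) and flips `F_μ` (since `μ ⬝ᵥ d = 1`), so it
pairs the zeros of `F_μ` with its ones.
-/

theorem ZMod.eq_of_eq_zero_iff_eq_zero {a b : ZMod 2} (h : a = 0 ↔ b = 0) : a = b := by
  revert a b; decide

theorem ZMod.add_eq_one_of_ne {a b : ZMod 2} (h : a ≠ b) : a + b = 1 := by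
  revert a b; decide

theorem cmpnt_eq_dotProduct {n m : ℕ} (F : BV n → BV m) (l : BV m) (x : BV n) :
    cmpnt F l x = l ⬝ᵥ F x := rfl

theorem nat_card_BV (n : ℕ) : Nat.card (BV n) = 2 ^ n := by
  simp

theorem two_mul_ncard_fiber_of_shift {α : Type*} [Finite α] (f : α → ZMod 2) {σ : α → α}
    (hσ : σ.Injective) (hf : ∀ x, f (σ x) = f x + 1) (c : ZMod 2) :
    2 * {x | f x = c}.ncard = Nat.card α := by
  have hle : ∀ c : ZMod 2, {x | f x = c}.ncard ≤ {x | f x = c + 1}.ncard := fun c =>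
    Set.ncard_le_ncard_of_injOn σ (fun x hx => by simp_all) hσ.injOn
  have hcompl : {x | f x = c}ᶜ = {x | f x = c + 1} := by
    ext x
    simp only [Set.mem_compl_iff, Set.mem_ofPred_eq]
    generalize f x = a
    revert a c; decide
  have hsum := Set.ncard_add_ncard_compl {x | f x = c}
  have hge := hle (c + 1)
  rw [hcompl] at hsum
  rw [add_assoc, CharTwo.add_self_eq_zero, add_zero] at hge
  have := hle c
  omega

theorem isBalanced_of_shift {n : ℕ} {f : BV n → ZMod 2} {σ : BV n → BV n} (hσ : σ.Injective)
    (hf : ∀ x, f (σ x) = f x + 1) : IsBalanced f := by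
  have h := two_mul_ncard_fiber_of_shift f hσ hf 1
  rw [nat_card_BV] at h
  cases n with
  | zero => omega
  | succ n =>
    show {x | f x = 1}.ncard = 2 ^ n
    rw [pow_succ] at h
    omega

theorem two_mul_ncard_dotProduct_eq {m : ℕ} {l : BV m} (hl : l ≠ 0) (c : ZMod 2) :
    2 * {y : BV m | l ⬝ᵥ y = c}.ncard = 2 ^ m := by
  obtain ⟨j, hj⟩ := Function.ne_iff.mp hl
  have hlj : l j = 1 := Fin.eq_one_of_ne_zero _ hj
  simpa using two_mul_ncard_fiber_of_shift (l ⬝ᵥ ·) (add_left_injective (Pi.single j 1))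
    (fun y => by rw [dotProduct_add, dotProduct_single_one, hlj]) c

theorem eq_of_setOf_dotProduct_eq {m : ℕ} {l l' y₀ : BV m} {c c' : ZMod 2} (hy₀ : l ⬝ᵥ y₀ = c)
    (h : {y | l ⬝ᵥ y = c} = {y | l' ⬝ᵥ y = c'}) : l = l' := by
  have hy₀' : l' ⬝ᵥ y₀ = c' := (Set.ext_iff.mp h y₀).mp hy₀
  funext j
  refine ZMod.eq_of_eq_zero_iff_eq_zero ?_
  have hj := Set.ext_iff.mp h (y₀ + Pi.single j 1)
  simpa only [Set.mem_ofPred_eq, dotProduct_add, dotProduct_single_one, hy₀, hy₀',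
    add_eq_left] using hj

theorem range_eq_of_cmpnt_eq {n : ℕ} {F : BV n → BV (n + 1)} (hF : F.Injective)
    {l : BV (n + 1)} (hl : l ≠ 0) {c : ZMod 2} (hc : ∀ x, cmpnt F l x = c) :
    Set.range F = {y | l ⬝ᵥ y = c} := by
  refine Set.eq_of_subset_of_ncard_le (Set.range_subset_iff.2 hc) ?_
  have := two_mul_ncard_dotProduct_eq hl c
  rw [Set.ncard_range_of_injective hF, nat_card_BV]
  rw [pow_succ] at this
  linarith

theorem eq_of_cmpnt_eq {n : ℕ} {F : BV n → BV (n + 1)} (hF : F.Injective)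
    {l l' : BV (n + 1)} (hl : l ≠ 0) (hl' : l' ≠ 0) {c c' : ZMod 2}
    (hc : ∀ x, cmpnt F l x = c) (hc' : ∀ x, cmpnt F l' x = c') : l = l' :=
  eq_of_setOf_dotProduct_eq (hc 0)
    ((range_eq_of_cmpnt_eq hF hl hc).symm.trans (range_eq_of_cmpnt_eq hF hl' hc'))

theorem isBalanced_cmpnt_of_range_eq {n m : ℕ} {F : BV n → BV m} (hF : F.Injective)
    {l : BV m} {c : ZMod 2} (hrange : Set.range F = {y | l ⬝ᵥ y = c})
    {μ : BV m} (hμ : ¬ ∃ c, ∀ x, cmpnt F μ x = c) : IsBalanced (cmpnt F μ) := by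
  obtain ⟨x₁, hx₁⟩ : ∃ x₁, cmpnt F μ x₁ ≠ cmpnt F μ 0 :=
    not_forall.mp fun h => hμ ⟨_, h⟩
  have hc : ∀ x, l ⬝ᵥ F x = c := fun x => hrange.subset (Set.mem_range_self x)
  have hld : l ⬝ᵥ (F x₁ + F 0) = 0 := by
    rw [dotProduct_add, hc, hc, CharTwo.add_self_eq_zero]
  have hμd : μ ⬝ᵥ (F x₁ + F 0) = 1 := by
    rw [dotProduct_add]
    exact ZMod.add_eq_one_of_ne hx₁
  have hmem : ∀ x, F x + (F x₁ + F 0) ∈ Set.range F := fun x => by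
    rw [hrange, Set.mem_ofPred_eq, dotProduct_add, hld, add_zero, hc]
  choose σ hσ using hmem
  have hσ_inj : σ.Injective := fun x y h =>
    hF (add_right_cancel (b := F x₁ + F 0) (by rw [← hσ, ← hσ, h]))
  refine isBalanced_of_shift hσ_inj fun x => ?_
  rw [cmpnt_eq_dotProduct, hσ, dotProduct_add, hμd, cmpnt_eq_dotProduct]

/-- For an embedding F : 𝔽₂ⁿ → 𝔽₂^(n+1), either |C(F)| = 2 (exactly one constant
    nontrivial component) and every component outside C(F) is balanced, or
    |C(F)| = 1 (no constant nontrivial component). -/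
theorem no_constants (n : ℕ) (F : BV n → BV (n + 1)) (hF : Function.Injective F) :
    ({l : BV (n + 1) | ∃ c, ∀ x, cmpnt F l x = c}.ncard = 2
      ∧ ∀ l : BV (n + 1), l ∉ {l : BV (n + 1) | ∃ c, ∀ x, cmpnt F l x = c} →
          IsBalanced (cmpnt F l))
    ∨ {l : BV (n + 1) | ∃ c, ∀ x, cmpnt F l x = c}.ncard = 1 := by
  set S := {l : BV (n + 1) | ∃ c, ∀ x, cmpnt F l x = c}
  have h0 : (0 : BV (n + 1)) ∈ S := ⟨0, fun _ => by simp [cmpnt]⟩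
  by_cases hex : ∃ l ∈ S, l ≠ 0
  · obtain ⟨l₀, ⟨c₀, hc₀⟩, hl₀⟩ := hex
    have hS : S = {0, l₀} := by
      refine Set.Subset.antisymm (fun l ⟨c, hc⟩ => ?_)
        (Set.insert_subset h0 (Set.singleton_subset_iff.2 ⟨c₀, hc₀⟩))
      by_cases hl : l = 0
      · exact Or.inl hl
      · exact Or.inr (eq_of_cmpnt_eq hF hl hl₀ hc hc₀)
    exact Or.inl ⟨by rw [hS]; exact Set.ncard_pair hl₀.symm,
      fun _ hμ => isBalanced_cmpnt_of_range_eq hF (range_eq_of_cmpnt_eq hF hl₀ hc₀) hμ⟩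
  · have hS : S = {0} :=
      Set.eq_singleton_iff_unique_mem.2 ⟨h0, fun l hl => by_contra fun h => hex ⟨l, hl, h⟩⟩
    exact Or.inr (by rw [hS, Set.ncard_singleton])
end
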